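/- arXiv:2308.15845 — 5 statements merged into one kernel-verified Lean document; each statement's English description precedes it below -/
import Mathlib

section
/- Let K be a commutative field. A square matrix A over K is X-formable if and only if A is similar to a block-diagonal matrix in which each diagonal block is a square matrix of size at most 2. -/
open Polynomial

/-- An `n × n` matrix is an X-form matrix if all its entries off the diagonal and the
anti-diagonal vanish. -/
def IsXForm {K : Type*} [Field K] {n : ℕ} (A : Matrix (Fin n) (Fin n) K) : Prop :=
  ∀ i j : Fin n, (i : ℕ) ≠ (j : ℕ) → (i : ℕ) + (j : ℕ) ≠ n - 1 → A i j = 0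

/-- A matrix is X-formable if it is similar to an X-form matrix. -/
def IsXFormable {K : Type*} [Field K] {n : ℕ} (A : Matrix (Fin n) (Fin n) K) : Prop :=
  ∃ B : Matrix (Fin n) (Fin n) K, IsXForm B ∧
    ∃ P : (Matrix (Fin n) (Fin n) K)ˣ,
      A = (P : Matrix (Fin n) (Fin n) K) * B * ((↑P⁻¹ : Matrix (Fin n) (Fin n) K))

/-!
Write `minRev i = min i (rev i)`, so that the fibres of `minRev` on `Fin n` are the pairs
`{i, n - 1 - i}` (and the middle singleton when `n` is odd). A matrix is in X-form exactly when
`B i j = 0` whenever `minRev i ≠ minRev j`, i.e. when it is block diagonal for the partition into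
these fibres, which have size at most `2`. Conversely, given blocks of sizes `≤ 2`, send each
block of size `2` to a pair `{p, n - 1 - p}` with `p` small and the blocks of size `1` to the
middle positions; this places every block inside one fibre of `minRev`, so the reindexed
block-diagonal matrix is in X-form, and reindexing is conjugation by a permutation matrix.
-/

namespace Matrix

theorem exists_units_reindex_eq_mul_mul {ι R : Type*} [Fintype ι] [DecidableEq ι] [Semiring R]
    (σ : ι ≃ ι) (M : Matrix ι ι R) :
    ∃ P : (Matrix ι ι R)ˣ, reindex σ σ M = (P : Matrix ι ι R) * M * (↑P⁻¹ : Matrix ι ι R) := by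
  refine ⟨(permMatrixHom (R := R)).toHomUnits σ, ?_⟩
  simp [← map_inv, PEquiv.toMatrix_toPEquiv_mul, PEquiv.mul_toMatrix_toPEquiv]

theorem exists_eq_reindex_blockDiagonal'_iff {ι κ α : Type*} {β : κ → Type*} [DecidableEq κ]
    [Zero α] (e : (Σ c, β c) ≃ ι) (M : Matrix ι ι α) :
    (∃ b : ∀ c, Matrix (β c) (β c) α, M = reindex e e (blockDiagonal' b)) ↔
      ∀ x y, x.1 ≠ y.1 → M (e x) (e y) = 0 := by
  constructor
  · rintro ⟨b, rfl⟩ x y hxy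
    simp [blockDiagonal'_apply_ne b _ _ hxy]
  · intro h
    refine ⟨fun c => of fun a a' => M (e ⟨c, a⟩) (e ⟨c, a'⟩), ?_⟩
    ext i j
    obtain ⟨⟨c, a⟩, rfl⟩ := e.surjective i
    obtain ⟨⟨d, a'⟩, rfl⟩ := e.surjective j
    by_cases hcd : c = d
    · subst hcd
      simp [blockDiagonal'_apply_eq]
    · simp [blockDiagonal'_apply_ne _ _ _ hcd, h ⟨c, a⟩ ⟨d, a'⟩ hcd]

end Matrix

noncomputable def Equiv.sigmaFinFiberEquiv {ι κ : Type*} [Fintype ι] [DecidableEq κ] (f : ι → κ) :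
    (Σ c, Fin (Fintype.card {i // f i = c})) ≃ ι :=
  (Equiv.sigmaCongrRight fun _ => (Fintype.equivFin _).symm).trans (Equiv.sigmaFiberEquiv f)

theorem Equiv.apply_sigmaFinFiberEquiv {ι κ : Type*} [Fintype ι] [DecidableEq κ] (f : ι → κ)
    (x : Σ c, Fin (Fintype.card {i // f i = c})) : f (Equiv.sigmaFinFiberEquiv f x) = x.1 :=
  ((Fintype.equivFin _).symm x.2).2

namespace Fin

variable {n : ℕ}

def minRev (i : Fin n) : Fin n := min i i.rev

theorem minRev_eq_minRev_iff {i j : Fin n} : i.minRev = j.minRev ↔ j = i ∨ j = i.rev := by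
  simp only [minRev, Fin.ext_iff, Fin.coe_min, Fin.val_rev]
  omega

theorem minRev_rev (i : Fin n) : i.rev.minRev = i.minRev := by
  rw [minRev, minRev, rev_rev, min_comm]

theorem card_minRev_eq_le_two (c : Fin n) : Fintype.card {i : Fin n // i.minRev = c} ≤ 2 := by
  rw [Fintype.card_subtype]
  calc (Finset.univ.filter (fun i : Fin n => i.minRev = c)).card
      ≤ ({c, c.rev} : Finset (Fin n)).card := by
        refine Finset.card_le_card fun i hi => ?_
        rw [Finset.mem_filter, minRev] at hi
        rcases min_choice i i.rev with h | h <;> simp [← hi.2, h]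
    _ ≤ 2 := Finset.card_le_two

end Fin

theorem isXForm_iff_minRev {K : Type*} [Field K] {n : ℕ} {B : Matrix (Fin n) (Fin n) K} :
    IsXForm B ↔ ∀ i j, i.minRev ≠ j.minRev → B i j = 0 := by
  have key : ∀ i j : Fin n, i.minRev = j.minRev ↔ (i : ℕ) = j ∨ (i : ℕ) + j = n - 1 := by
    intro i j
    rw [Fin.minRev_eq_minRev_iff, Fin.ext_iff, Fin.ext_iff, Fin.val_rev]
    omega
  simp only [IsXForm, ne_eq, key, not_or, and_imp]

section Placement

variable {ι : Type*} {sz : ι → ℕ}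

theorem two_mul_card_add_card_eq_sum [Fintype ι] (hsz : ∀ i, sz i ≤ 2) :
    2 * Fintype.card {i // sz i = 2} + Fintype.card {i // sz i = 1} = ∑ i, sz i := by
  rw [Fintype.card_subtype, Fintype.card_subtype, Finset.card_filter, Finset.card_filter,
    Finset.mul_sum, ← Finset.sum_add_distrib]
  refine Finset.sum_congr rfl fun i _ => ?_
  have := hsz i
  interval_cases sz i <;> rfl

variable {t s n : ℕ}

/-- The `p`-th block of size two goes to the positions `p` and `n - 1 - p`, the `q`-th block of
size one to the position `t + q`. -/
def blockPlacement (hsz : ∀ i, sz i ≤ 2) (τ₂ : {i // sz i = 2} ≃ Fin t)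
    (τ₁ : {i // sz i = 1} ≃ Fin s) (hn : 2 * t + s = n) (x : Σ i, Fin (sz i)) : Fin n :=
  if h₂ : sz x.1 = 2 then
    if (x.2 : ℕ) = 0 then Fin.castLE (by omega) (τ₂ ⟨x.1, h₂⟩)
    else (Fin.castLE (by omega) (τ₂ ⟨x.1, h₂⟩)).rev
  else
    have h₁ : sz x.1 = 1 := by have := x.2.2; have := hsz x.1; omega
    ⟨t + τ₁ ⟨x.1, h₁⟩, by have := (τ₁ ⟨x.1, h₁⟩).2; omega⟩

variable {hsz : ∀ i, sz i ≤ 2} {τ₂ : {i // sz i = 2} ≃ Fin t} {τ₁ : {i // sz i = 1} ≃ Fin s}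
  {hn : 2 * t + s = n}

theorem minRev_blockPlacement_eq {x y : Σ i, Fin (sz i)} (hxy : x.1 = y.1) :
    (blockPlacement hsz τ₂ τ₁ hn x).minRev = (blockPlacement hsz τ₂ τ₁ hn y).minRev := by
  obtain ⟨i, a⟩ := x
  obtain ⟨j, b⟩ := y
  obtain rfl : i = j := hxy
  by_cases h₂ : sz i = 2
  · simp only [blockPlacement, dif_pos h₂]
    split_ifs <;> simp only [Fin.minRev_rev]
  · obtain rfl : a = b := Fin.ext (by have := a.2; have := b.2; have := hsz i; omega)
    rfl

theorem blockPlacement_injective : Function.Injective (blockPlacement hsz τ₂ τ₁ hn) := by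
  have val_inj {P : ι → Prop} {m : ℕ} (τ : {i // P i} ≃ Fin m) {i j : ι} (hi : P i) (hj : P j)
      (h : (τ ⟨i, hi⟩ : ℕ) = τ ⟨j, hj⟩) : i = j :=
    congrArg Subtype.val (τ.injective (Fin.ext h))
  rintro ⟨i, a⟩ ⟨j, b⟩ h
  have hv := congrArg Fin.val h
  have := a.2; have := b.2; have := hsz i; have := hsz j
  suffices i = j ∧ (a : ℕ) = b by
    obtain ⟨rfl, hab⟩ := this
    exact congrArg (Sigma.mk i) (Fin.ext hab)
  by_cases hi : sz i = 2 <;> by_cases hj : sz j = 2 <;>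
    simp only [blockPlacement, hi, hj, dite_true, dite_false] at hv
  · have := (τ₂ ⟨i, hi⟩).2; have := (τ₂ ⟨j, hj⟩).2
    have hτ : (τ₂ ⟨i, hi⟩ : ℕ) = τ₂ ⟨j, hj⟩ ∧ (a : ℕ) = b := by
      split_ifs at hv <;> simp only [Fin.val_rev, Fin.val_castLE] at hv <;> omega
    exact ⟨val_inj τ₂ hi hj hτ.1, hτ.2⟩
  · have := (τ₂ ⟨i, hi⟩).2; have := (τ₁ ⟨j, by omega⟩).2
    split_ifs at hv <;> simp only [Fin.val_rev, Fin.val_castLE] at hv <;> omega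
  · have := (τ₁ ⟨i, by omega⟩).2; have := (τ₂ ⟨j, hj⟩).2
    split_ifs at hv <;> simp only [Fin.val_rev, Fin.val_castLE] at hv <;> omega
  · exact ⟨val_inj τ₁ _ _ (by omega), by omega⟩

end Placement

theorem exists_equiv_minRev_eq {ι : Type*} [Fintype ι] {sz : ι → ℕ} (hsz : ∀ i, sz i ≤ 2) {n : ℕ}
    (hn : ∑ i, sz i = n) :
    ∃ φ : (Σ i, Fin (sz i)) ≃ Fin n, ∀ x y, x.1 = y.1 → (φ x).minRev = (φ y).minRev := by
  have hcard : 2 * _ + _ = n := (two_mul_card_add_card_eq_sum hsz).trans hn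
  let f := blockPlacement hsz (Fintype.equivFin _) (Fintype.equivFin _) hcard
  have hf : Function.Bijective f :=
    (Fintype.bijective_iff_injective_and_card f).2 ⟨blockPlacement_injective, by simp [hn]⟩
  exact ⟨Equiv.ofBijective f hf, fun _ _ => minRev_blockPlacement_eq (hsz := hsz) (hn := hcard)⟩

section XForm

variable {K : Type*} [Field K] {n : ℕ}

theorem IsXForm.isXFormable {B : Matrix (Fin n) (Fin n) K} (hB : IsXForm B) : IsXFormable B :=
  ⟨B, hB, 1, by simp⟩

theorem IsXFormable.conj {A : Matrix (Fin n) (Fin n) K} (hA : IsXFormable A)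
    (P : (Matrix (Fin n) (Fin n) K)ˣ) :
    IsXFormable ((P : Matrix (Fin n) (Fin n) K) * A * (↑P⁻¹ : Matrix (Fin n) (Fin n) K)) := by
  obtain ⟨B, hB, Q, rfl⟩ := hA
  exact ⟨B, hB, P * Q, by simp [mul_assoc]⟩

theorem IsXFormable.reindex {A : Matrix (Fin n) (Fin n) K} (hA : IsXFormable A)
    (σ : Fin n ≃ Fin n) : IsXFormable (Matrix.reindex σ σ A) := by
  obtain ⟨P, hP⟩ := Matrix.exists_units_reindex_eq_mul_mul σ A
  exact hP ▸ hA.conj P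

theorem IsXForm.exists_eq_reindex_blockDiagonal' {B : Matrix (Fin n) (Fin n) K} (hB : IsXForm B) :
    ∃ (sz : Fin n → ℕ), (∀ c, sz c ≤ 2) ∧
      ∃ (blocks : ∀ c, Matrix (Fin (sz c)) (Fin (sz c)) K) (e : (Σ c, Fin (sz c)) ≃ Fin n),
        B = Matrix.reindex e e (Matrix.blockDiagonal' blocks) := by
  let e := Equiv.sigmaFinFiberEquiv (Fin.minRev (n := n))
  obtain ⟨blocks, hblocks⟩ := (Matrix.exists_eq_reindex_blockDiagonal'_iff e B).2 fun x y hxy =>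
    isXForm_iff_minRev.1 hB _ _ (by simpa [e, Equiv.apply_sigmaFinFiberEquiv] using hxy)
  exact ⟨_, Fin.card_minRev_eq_le_two, blocks, e, hblocks⟩

theorem isXFormable_reindex_blockDiagonal' {ι : Type*} [Fintype ι] [DecidableEq ι] {sz : ι → ℕ}
    (hsz : ∀ i, sz i ≤ 2) (blocks : ∀ i, Matrix (Fin (sz i)) (Fin (sz i)) K)
    (e : (Σ i, Fin (sz i)) ≃ Fin n) :
    IsXFormable (Matrix.reindex e e (Matrix.blockDiagonal' blocks)) := by
  obtain ⟨φ, hφ⟩ := exists_equiv_minRev_eq hsz (by simpa using Fintype.card_congr e)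
  have hX : IsXForm (Matrix.reindex φ φ (Matrix.blockDiagonal' blocks)) := by
    refine isXForm_iff_minRev.2 fun i j hij => ?_
    obtain ⟨x, rfl⟩ := φ.surjective i
    obtain ⟨y, rfl⟩ := φ.surjective j
    exact (Matrix.exists_eq_reindex_blockDiagonal'_iff φ _).1 ⟨blocks, rfl⟩ x y
      fun hxy => hij (hφ x y hxy)
  have hσ : Matrix.reindex e e (Matrix.blockDiagonal' blocks) =
      Matrix.reindex (φ.symm.trans e) (φ.symm.trans e)
        (Matrix.reindex φ φ (Matrix.blockDiagonal' blocks)) := by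
    ext
    simp
  exact hσ ▸ hX.isXFormable.reindex _

end XForm

/-- A matrix is X-formable iff it is similar to a block-diagonal matrix in which every
diagonal block is a square matrix of size at most `2`. -/
theorem xformable_iff_similar_blockDiagonal {K : Type*} [Field K] {n : ℕ}
    (A : Matrix (Fin n) (Fin n) K) :
    IsXFormable A ↔
      ∃ (k : ℕ) (sz : Fin k → ℕ), (∀ i, sz i ≤ 2) ∧
        ∃ (blocks : ∀ i : Fin k, Matrix (Fin (sz i)) (Fin (sz i)) K)
          (e : (Σ i : Fin k, Fin (sz i)) ≃ Fin n)
          (P : (Matrix (Fin n) (Fin n) K)ˣ),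
          A = (P : Matrix (Fin n) (Fin n) K) *
                (Matrix.reindex e e (Matrix.blockDiagonal' blocks)) *
                ((↑P⁻¹ : Matrix (Fin n) (Fin n) K)) := by
  constructor
  · rintro ⟨B, hB, P, rfl⟩
    obtain ⟨sz, hsz, blocks, e, rfl⟩ := hB.exists_eq_reindex_blockDiagonal'
    exact ⟨n, sz, hsz, blocks, e, P, rfl⟩
  · rintro ⟨k, sz, hsz, blocks, e, P, rfl⟩
    exact (isXFormable_reindex_blockDiagonal' hsz blocks e).conj P
end

section
/- Let K be an algebraically closed field and A an n×n matrix over K. Then A is X-formable if and only if all the Jordan blocks in the Jordan normal form of A have size 1 or 2; equivalently, for every eigenvalue λ of A, the kernel of (A − λI)² equals the kernel of (A − λI)ⁿ (the generalized eigenspace of λ). -/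
open Polynomial

/-!
An X-form matrix `B` commutes with every diagonal matrix whose diagonal is invariant under
`i ↦ n - 1 - i`. The projections onto the coordinate pairs `{i, n - 1 - i}` are of this kind, so
whether `(B - λ)ᵏ v` vanishes can be tested on the projections of `v`, which lie in
`(B - λ)`-invariant subspaces of dimension at most two; there the kernels of the powers of
`B - λ` stabilise from the exponent two on, and similarity transports this to `A`.

Conversely, if `(A - λ)²` kills the generalized eigenspace of `λ`, that eigenspace has a basis
made of pairs `u, (A - λ) u` and of eigenvectors. Putting the first vectors of the pairs at the
positions `i < m`, their partners at `n - 1 - i`, and the eigenvectors in the middle gives a basis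
in which every basis vector is mapped into the span of itself and its mirror image, i.e. in which
the matrix of `A` is X-form.
-/

open Module Matrix

theorem Basis.sumExtend_apply_inl {K V ι : Type*} [DivisionRing K] [AddCommGroup V] [Module K V]
    {v : ι → V} (hv : LinearIndependent K v) (i : ι) : Basis.sumExtend hv (.inl i) = v i := by
  simp only [Basis.sumExtend, Equiv.trans_def, Basis.coe_reindex, Basis.coe_extend,
    Function.comp_apply]
  rfl

theorem Fin.exists_sumSumEquiv_rev {m t n : ℕ} (h : m + m + t = n) :
    ∃ e : Fin m ⊕ Fin m ⊕ Fin t ≃ Fin n, ∀ i, e (.inr (.inl i)) = (e (.inl i)).rev := by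
  refine ⟨((Equiv.refl _).sumCongr
      ((Equiv.sumComm _ _).trans ((Equiv.refl _).sumCongr revPerm))).trans
    (((Equiv.refl _).sumCongr finSumFinEquiv).trans (finSumFinEquiv.trans (finCongr (by omega)))),
    fun i => ?_⟩
  ext
  simp only [Equiv.trans_apply, Equiv.sumCongr_apply, Equiv.coe_refl, Equiv.coe_trans,
    Equiv.sumComm_apply, Sum.map_inr, Sum.map_inl, Function.comp_apply, Sum.swap_inl, id_eq,
    revPerm_apply, finSumFinEquiv_apply_left, finSumFinEquiv_apply_right, finCongr_apply, val_cast,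
    val_natAdd, val_castAdd, val_rev]
  omega

theorem Matrix.ker_mulVecLin_units_conj {ι R : Type*} [Fintype ι] [DecidableEq ι] [CommRing R]
    (P : (Matrix ι ι R)ˣ) (N : Matrix ι ι R) :
    LinearMap.ker ((P : Matrix ι ι R) * N * (↑P⁻¹ : Matrix ι ι R)).mulVecLin =
      (LinearMap.ker N.mulVecLin).comap (↑P⁻¹ : Matrix ι ι R).mulVecLin := by
  ext v
  simp only [LinearMap.mem_ker, Submodule.mem_comap, mulVecLin_apply]
  refine ⟨fun h => ?_, fun h => by rw [← mulVec_mulVec, ← mulVec_mulVec, h, mulVec_zero]⟩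
  have := congrArg ((↑P⁻¹ : Matrix ι ι R) *ᵥ ·) h
  rwa [mulVec_zero, mulVec_mulVec, ← Matrix.mul_assoc, ← Matrix.mul_assoc, Units.inv_mul,
    Matrix.one_mul, ← mulVec_mulVec] at this

theorem Matrix.mulVecLin_sub_smul_one_pow {ι R : Type*} [Fintype ι] [DecidableEq ι] [CommRing R]
    (A : Matrix ι ι R) (μ : R) (k : ℕ) :
    ((A - μ • 1) ^ k).mulVecLin = (A.mulVecLin - μ • 1) ^ k := by
  change toLinAlgEquiv' _ = (toLinAlgEquiv' A - μ • 1) ^ k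
  rw [map_pow, map_sub, map_smul, map_one]

namespace Module.End

variable {K V : Type*} [Field K] [AddCommGroup V] [Module K V]

theorem maxGenEigenspace_eq_bot_of_not_hasEigenvalue {f : End K V} {μ : K}
    (hμ : ¬f.HasEigenvalue μ) : f.maxGenEigenspace μ = ⊥ := by
  by_contra hne
  exact hμ ((hasUnifEigenvalue_iff_hasUnifEigenvalue_one (k := ⊤) (by simp)).mp hne)

theorem exists_basis_apply_mem_span_rev {f : End K V} {m t n : ℕ}
    (b : Basis (Fin m ⊕ Fin m ⊕ Fin t) K V)
    (h1 : ∀ i, ∃ μ : K, f (b (.inl i)) = μ • b (.inl i) + b (.inr (.inl i)))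
    (h2 : ∀ j, ∃ μ : K, f (b (.inr j)) = μ • b (.inr j)) (hn : finrank K V = n) :
    ∃ c : Basis (Fin n) K V, ∀ j, f (c j) ∈ Submodule.span K (c '' {j, j.rev}) := by
  have hcard : m + m + t = n := by
    simp [← hn, finrank_eq_card_basis b, add_assoc]
  obtain ⟨e, he⟩ := Fin.exists_sumSumEquiv_rev hcard
  refine ⟨b.reindex e, fun j => ?_⟩
  obtain ⟨x, rfl⟩ := e.surjective j
  rw [Set.image_pair, Basis.reindex_apply, Basis.reindex_apply, Equiv.symm_apply_apply]
  rcases x with i | j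
  · obtain ⟨μ, hμ⟩ := h1 i
    rw [hμ, ← he, Equiv.symm_apply_apply]
    exact add_mem (Submodule.smul_mem _ _ (Submodule.subset_span (by simp)))
      (Submodule.subset_span (by simp))
  · obtain ⟨μ, hμ⟩ := h2 j
    rw [hμ]
    exact Submodule.smul_mem _ _ (Submodule.subset_span (by simp))

variable [FiniteDimensional K V]

theorem pow_apply_eq_zero_of_commute {f p : End K V} (hfp : Commute f p) {k m : ℕ}
    (hm : finrank K (LinearMap.range p) ≤ m) {v : V} (hv : (f ^ k) v = 0) :
    (f ^ m) (p v) = 0 := by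
  have hW : ∀ x ∈ LinearMap.range p, f x ∈ LinearMap.range p := by
    rintro _ ⟨y, rfl⟩
    exact ⟨f y, LinearMap.congr_fun hfp.eq.symm y⟩
  have hpv : ⟨p v, p.mem_range_self v⟩ ∈ LinearMap.ker (f.restrict hW ^ k) := by
    rw [LinearMap.mem_ker, pow_restrict, Subtype.ext_iff, LinearMap.coe_restrict_apply,
      ← mul_apply, (hfp.pow_left k).eq, mul_apply, hv, map_zero, ZeroMemClass.coe_zero]
  have := ker_pow_le_ker_pow_finrank _ k hpv
  rw [← ker_pow_eq_ker_pow_finrank_of_le hm, LinearMap.mem_ker, pow_restrict, Subtype.ext_iff,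
    LinearMap.coe_restrict_apply] at this
  exact this

theorem exists_basis_of_sq_eq_zero (g : End K V) (hg : ∀ x, g (g x) = 0) :
    ∃ (r s : ℕ) (b : Basis (Fin r ⊕ Fin r ⊕ Fin s) K V),
      (∀ i, g (b (.inl i)) = b (.inr (.inl i))) ∧ ∀ j, g (b (.inr j)) = 0 := by
  obtain ⟨U, hU⟩ := (LinearMap.ker g).exists_isCompl
  let bU := finBasis K U
  let gU : U →ₗ[K] LinearMap.ker g := g.restrict fun x _ => hg x
  have hgU : LinearIndependent K (gU ∘ bU) :=
    bU.linearIndependent.map' gU <| LinearMap.ker_eq_bot.mpr <|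
      (LinearMap.injective_restrict_iff _).mpr hU.symm.disjoint
  have : Finite (Basis.sumExtendIndex hgU) :=
    have := Module.Finite.finite_basis (Basis.sumExtend hgU); Finite.sum_right (Fin (finrank K U))
  let bE := (Basis.sumExtend hgU).reindex ((Equiv.refl _).sumCongr (Finite.equivFin _))
  have hbE : ∀ i, bE (.inl i) = gU (bU i) := fun i => by
    rw [Basis.reindex_apply, Equiv.sumCongr_symm, Equiv.sumCongr_apply, Sum.map_inl,
      Equiv.refl_symm, Equiv.refl_apply, Basis.sumExtend_apply_inl, Function.comp_apply]
  refine ⟨_, _, (bU.prod bE).map (U.prodEquivOfIsCompl _ hU.symm), fun i => ?_, fun j => ?_⟩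
  · simp only [Basis.map_apply, Basis.prod_apply, Sum.elim_inl, Sum.elim_inr, Function.comp_apply,
      LinearMap.inl_apply, LinearMap.inr_apply, Submodule.coe_prodEquivOfIsCompl',
      ZeroMemClass.coe_zero, add_zero, zero_add, hbE]
    rfl
  · simp only [Basis.map_apply, Basis.prod_apply, Sum.elim_inr, Function.comp_apply,
      LinearMap.inr_apply, Submodule.coe_prodEquivOfIsCompl', ZeroMemClass.coe_zero, zero_add]
    exact (bE j).2

theorem exists_basis_maxGenEigenspace (f : End K V) (μ : K)
    (hμ : f.maxGenEigenspace μ ≤ LinearMap.ker ((f - μ • 1) ^ 2)) :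
    ∃ (r s : ℕ) (b : Basis (Fin r ⊕ Fin r ⊕ Fin s) K (f.maxGenEigenspace μ)),
      (∀ i, f (b (.inl i)) = μ • b (.inl i) + b (.inr (.inl i))) ∧
        ∀ j, f (b (.inr j)) = μ • (b (.inr j) : V) := by
  have hmaps : ∀ x ∈ f.maxGenEigenspace μ, (f - μ • 1) x ∈ f.maxGenEigenspace μ :=
    f.mapsTo_maxGenEigenspace_of_comm
      ((Commute.refl f).sub_right ((Commute.one_right f).smul_right μ)) μ
  let g := (f - μ • 1).restrict hmaps
  have hg : ∀ x, g (g x) = 0 := fun x => by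
    have := hμ x.2
    rw [LinearMap.mem_ker, pow_two, mul_apply] at this
    exact Subtype.ext this
  obtain ⟨r, s, b, h1, h2⟩ := exists_basis_of_sq_eq_zero g hg
  refine ⟨r, s, b, fun i => ?_, fun j => ?_⟩
  · have := congrArg Subtype.val (h1 i)
    simp only [g, LinearMap.coe_restrict_apply, LinearMap.sub_apply, LinearMap.smul_apply,
      one_apply] at this
    rw [← this, add_sub_cancel]
  · have := congrArg Subtype.val (h2 j)
    simp only [g, LinearMap.coe_restrict_apply, LinearMap.sub_apply, LinearMap.smul_apply,
      one_apply, ZeroMemClass.coe_zero] at this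
    exact sub_eq_zero.mp this

theorem exists_basis_of_maxGenEigenspace_le [IsAlgClosed K] (f : End K V)
    (hf : ∀ μ, f.maxGenEigenspace μ ≤ LinearMap.ker ((f - μ • 1) ^ 2)) :
    ∃ (m t : ℕ) (b : Basis (Fin m ⊕ Fin m ⊕ Fin t) K V),
      (∀ i, ∃ μ : K, f (b (.inl i)) = μ • b (.inl i) + b (.inr (.inl i))) ∧
        ∀ j, ∃ μ : K, f (b (.inr j)) = μ • b (.inr j) := by
  classical
  choose r s b h1 h2 using fun μ => exists_basis_maxGenEigenspace f μ (hf μ)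
  have hV := DirectSum.isInternal_submodule_of_iSupIndep_of_iSup_eq_top
    f.independent_maxGenEigenspace f.iSup_maxGenEigenspace_eq_top
  let C := Σ μ, Fin (r μ)
  let S := Σ μ, Fin (s μ)
  let e : (Σ μ, Fin (r μ) ⊕ Fin (r μ) ⊕ Fin (s μ)) ≃ C ⊕ C ⊕ S :=
    (Equiv.sigmaSumDistrib _ _).trans ((Equiv.refl _).sumCongr (Equiv.sigmaSumDistrib _ _))
  have : Finite (C ⊕ C ⊕ S) :=
    have := Module.Finite.finite_basis (hV.collectedBasis b); Finite.of_equiv _ e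
  have : Finite C := Finite.sum_left (C ⊕ S)
  have : Finite (C ⊕ S) := Finite.sum_right C
  have : Finite S := Finite.sum_right C
  let b' := (hV.collectedBasis b).reindex (e.trans ((Finite.equivFin C).sumCongr
    ((Finite.equivFin C).sumCongr (Finite.equivFin S))))
  refine ⟨_, _, b', fun i => ⟨((Finite.equivFin C).symm i).1, ?_⟩,
    Sum.rec (fun i => ⟨((Finite.equivFin C).symm i).1, ?_⟩)
      (fun j => ⟨((Finite.equivFin S).symm j).1, ?_⟩)⟩
  all_goals simp only [b', e, Basis.coe_reindex, DirectSum.IsInternal.collectedBasis_coe,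
    Equiv.symm_trans, Equiv.sumCongr_symm, Equiv.refl_symm, Equiv.coe_trans, Function.comp_apply]
  exacts [h1 _ _, h2 _ _, h2 _ _]

end Module.End

section XForm

variable {K : Type*} [Field K] {n : ℕ}

theorem IsXForm.apply_eq_zero {M : Matrix (Fin n) (Fin n) K} (hM : IsXForm M) {i j : Fin n}
    (hij : i ≠ j) (hrev : i ≠ j.rev) : M i j = 0 :=
  hM i j (fun h => hij (Fin.ext h)) fun h => hrev (Fin.ext (by rw [Fin.val_rev]; omega))

theorem IsXForm.commute_diagonal {M : Matrix (Fin n) (Fin n) K} (hM : IsXForm M) {d : Fin n → K}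
    (hd : ∀ i, d i.rev = d i) : Commute M (diagonal d) := by
  ext i j
  rw [mul_diagonal, diagonal_mul]
  by_cases hij : i = j
  · rw [hij, mul_comm]
  by_cases hrev : i = j.rev
  · rw [hrev, hd, mul_comm]
  · rw [hM.apply_eq_zero hij hrev, zero_mul, mul_zero]

theorem IsXForm.pow_mulVec_eq_zero {M : Matrix (Fin n) (Fin n) K} (hM : IsXForm M) {k m : ℕ}
    (hm : min 2 n ≤ m) {v : Fin n → K} (hv : (M ^ k) *ᵥ v = 0) : (M ^ m) *ᵥ v = 0 := by
  classical
  funext j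
  let s : Finset (Fin n) := {j, j.rev}
  let d : Fin n → K := fun i => if i ∈ s then 1 else 0
  have hd : ∀ i, d i.rev = d i := fun i => by
    simp only [d, s, Finset.mem_insert, Finset.mem_singleton, Fin.rev_eq_iff, Fin.rev_rev, or_comm]
  have hMd := hM.commute_diagonal hd
  have hrank : (diagonal d).rank ≤ m := by
    refine le_trans ?_ hm
    rw [rank_diagonal]
    refine le_min ?_ (Fintype.card_subtype_le _ |>.trans (Fintype.card_fin n).le)
    calc Fintype.card {i // d i ≠ 0} = Fintype.card s :=
          Fintype.card_congr (Equiv.subtypeEquivRight fun i => by simp [d])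
      _ ≤ 2 := (Fintype.card_coe s).le.trans Finset.card_le_two
  have key := Module.End.pow_apply_eq_zero_of_commute (hMd.map toLinAlgEquiv') hrank
    (v := v) (by rw [← map_pow, toLinAlgEquiv'_apply, hv])
  rw [← map_pow, toLinAlgEquiv'_apply, toLinAlgEquiv'_apply] at key
  calc ((M ^ m) *ᵥ v) j = (diagonal d *ᵥ ((M ^ m) *ᵥ v)) j := by simp [mulVec_diagonal, d, s]
    _ = ((M ^ m) *ᵥ (diagonal d *ᵥ v)) j := by
      rw [mulVec_mulVec, mulVec_mulVec, (hMd.pow_left m).eq]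
    _ = 0 := by rw [key, Pi.zero_apply]

theorem IsXForm.ker_pow_two_eq {M : Matrix (Fin n) (Fin n) K} (hM : IsXForm M) :
    LinearMap.ker (M ^ 2).mulVecLin = LinearMap.ker (M ^ n).mulVecLin := by
  ext v
  simp only [LinearMap.mem_ker, mulVecLin_apply]
  exact ⟨hM.pow_mulVec_eq_zero (min_le_right 2 n), hM.pow_mulVec_eq_zero (min_le_left 2 n)⟩

theorem IsXForm.sub_smul_one {M : Matrix (Fin n) (Fin n) K} (hM : IsXForm M) (c : K) :
    IsXForm (M - c • 1) := fun i j hij hrev => by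
  rw [Matrix.sub_apply, hM i j hij hrev, Matrix.smul_apply,
    one_apply_ne fun h => hij (congrArg _ h), smul_zero, sub_zero]

theorem IsXFormable.ker_pow_two_eq {A : Matrix (Fin n) (Fin n) K} (hA : IsXFormable A) (μ : K) :
    LinearMap.ker ((A - μ • 1) ^ 2).mulVecLin =
      LinearMap.ker ((A - μ • 1) ^ n).mulVecLin := by
  obtain ⟨B, hB, P, rfl⟩ := hA
  have hconj : P.val * B * (P⁻¹).val - μ • 1 = P.val * (B - μ • 1) * (P⁻¹).val := by
    simp [mul_sub, sub_mul]
  rw [hconj, Units.conj_pow, Units.conj_pow, Matrix.ker_mulVecLin_units_conj,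
    Matrix.ker_mulVecLin_units_conj, (hB.sub_smul_one μ).ker_pow_two_eq]

theorem isXForm_toMatrix_of_apply_mem_span_rev {V : Type*} [AddCommGroup V] [Module K V]
    {f : End K V} (c : Basis (Fin n) K V)
    (hc : ∀ j, f (c j) ∈ Submodule.span K (c '' {j, j.rev})) :
    IsXForm (LinearMap.toMatrix c c f) := by
  intro i j hij hrev
  rw [LinearMap.toMatrix_apply, ← Finsupp.notMem_support_iff]
  intro hi
  rcases c.mem_span_image.mp (hc j) hi with rfl | rfl
  · exact hij rfl
  · exact hrev (by rw [Fin.val_rev]; omega)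

theorem isXFormable_of_isXForm_toMatrix {A : Matrix (Fin n) (Fin n) K}
    (c : Basis (Fin n) K (Fin n → K)) (hc : IsXForm (LinearMap.toMatrix c c A.mulVecLin)) :
    IsXFormable A := by
  let std := Pi.basisFun K (Fin n)
  refine ⟨_, hc, ⟨std.toMatrix c, c.toMatrix std, std.toMatrix_mul_toMatrix_flip c,
    c.toMatrix_mul_toMatrix_flip std⟩, ?_⟩
  change A = std.toMatrix c * _ * c.toMatrix std
  rw [basis_toMatrix_mul_linearMap_toMatrix_mul_basis_toMatrix, LinearMap.toMatrix_eq_toMatrix',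
    ← toLin'_apply', LinearMap.toMatrix'_toLin']

theorem isXFormable_of_maxGenEigenspace_le [IsAlgClosed K] (A : Matrix (Fin n) (Fin n) K)
    (hA : ∀ μ, End.maxGenEigenspace A.mulVecLin μ ≤
      LinearMap.ker ((A.mulVecLin - μ • 1) ^ 2)) :
    IsXFormable A := by
  obtain ⟨m, t, b, h1, h2⟩ := End.exists_basis_of_maxGenEigenspace_le _ hA
  obtain ⟨c, hc⟩ := End.exists_basis_apply_mem_span_rev b h1 h2 (finrank_fin_fun K)
  exact isXFormable_of_isXForm_toMatrix c (isXForm_toMatrix_of_apply_mem_span_rev c hc)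

end XForm

/-- Over an algebraically closed field, a matrix is X-formable iff all Jordan blocks
in its Jordan normal form have size `1` or `2`, i.e. for every eigenvalue `λ` of `A`
the kernel of `(A - λI)²` equals the kernel of `(A - λI)ⁿ` (the generalized eigenspace). -/
theorem xformable_iff_gen_eigenspace {K : Type*} [Field K] [IsAlgClosed K]
    {n : ℕ} (A : Matrix (Fin n) (Fin n) K) :
    IsXFormable A ↔
      ∀ lam : K, (Matrix.charpoly A).IsRoot lam →
        LinearMap.ker (Matrix.mulVecLin ((A - lam • (1 : Matrix (Fin n) (Fin n) K)) ^ 2)) =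
          LinearMap.ker (Matrix.mulVecLin ((A - lam • (1 : Matrix (Fin n) (Fin n) K)) ^ n)) := by
  refine ⟨fun hA lam _ => hA.ker_pow_two_eq lam, fun h => ?_⟩
  refine isXFormable_of_maxGenEigenspace_le A fun μ => ?_
  by_cases hμ : A.charpoly.IsRoot μ
  · rw [End.maxGenEigenspace_eq_genEigenspace_finrank, finrank_fin_fun, End.genEigenspace_nat,
      ← mulVecLin_sub_smul_one_pow, ← h μ hμ, mulVecLin_sub_smul_one_pow]
  · rw [← charpoly_mulVecLin, ← End.hasEigenvalue_iff_isRoot_charpoly] at hμ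
    rw [End.maxGenEigenspace_eq_bot_of_not_hasEigenvalue hμ]
    exact bot_le
end

section
/- For every n ≥ 1, the set of complex polynomials of degree exactly n all of whose roots are simple or double (every root has multiplicity at most 2) is an open subset of the space ℂ_n[X] of complex polynomials of degree at most n, where ℂ_n[X] is equipped with the sup-norm on coefficients ‖∑ a_k X^k‖_∞ = max_k |a_k|. -/
open Polynomial

/-- The polynomial `∑ aₖ Xᵏ` associated to the coefficient vector `a`; the space
`𝕂ₙ[X]` of polynomials of degree at most `n` is identified with the coefficient space
`Fin (n+1) → 𝕂`, whose product topology coincides with the sup-norm topology. -/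
noncomputable def polyOf {K : Type*} [Semiring K] {n : ℕ} (a : Fin (n + 1) → K) :
    Polynomial K :=
  ∑ k : Fin (n + 1), Polynomial.C (a k) * Polynomial.X ^ (k : ℕ)

/-!
A root of multiplicity at least three is a common root of `p`, `p'` and `p''`. Near a
polynomial of exact degree `n` the leading coefficient stays away from zero, so Cauchy's bound
confines all roots to one closed ball. Having a common root of `p`, `p'`, `p''` in a fixed
compact set is a closed condition on the coefficients: it is the projection of a closed set
along a compact factor.
-/

section Semiring

variable {K : Type*} [Semiring K] {n : ℕ}

theorem coeff_polyOf (a : Fin (n + 1) → K) (i : ℕ) :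
    (polyOf a).coeff i = ∑ k : Fin (n + 1), if i = k then a k else 0 := by
  simp only [polyOf, finsetSum_coeff, coeff_C_mul_X_pow]

theorem coeff_polyOf_val (a : Fin (n + 1) → K) (k : Fin (n + 1)) :
    (polyOf a).coeff k = a k := by
  rw [coeff_polyOf, Finset.sum_eq_single k (fun j _ hj => if_neg (Fin.val_ne_of_ne hj.symm))
    (by simp)]
  simp

theorem degree_polyOf_le (a : Fin (n + 1) → K) : (polyOf a).degree ≤ n :=
  (degree_sum_le _ _).trans <| Finset.sup_le fun k _ =>
    (degree_C_mul_X_pow_le _ _).trans <| by exact_mod_cast Nat.lt_succ_iff.mp k.isLt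

theorem degree_polyOf_eq_iff (a : Fin (n + 1) → K) :
    (polyOf a).degree = n ↔ a (Fin.last n) ≠ 0 := by
  have hcoeff : (polyOf a).coeff n = a (Fin.last n) := coeff_polyOf_val a (Fin.last n)
  refine ⟨fun h => hcoeff ▸ coeff_ne_zero_of_eq_degree h, fun h => ?_⟩
  exact (degree_polyOf_le a).antisymm (le_degree_of_ne_zero (hcoeff ▸ h))

end Semiring

theorem Continuous.eval_iterate_derivative_polyOf {K X : Type*} [CommSemiring K]
    [TopologicalSpace K] [IsTopologicalSemiring K] [TopologicalSpace X] {n : ℕ}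
    {f : X → Fin (n + 1) → K} {g : X → K} (hf : Continuous f) (hg : Continuous g) (m : ℕ) :
    Continuous fun x => (derivative^[m] (polyOf (f x))).eval (g x) := by
  simp only [polyOf, iterate_derivative_sum, iterate_derivative_C_mul, eval_finsetSum,
    eval_C_mul]
  fun_prop

theorem norm_lt_of_isRoot_polyOf {K : Type*} [NormedDivisionRing K] {n : ℕ}
    {a : Fin (n + 1) → K} (ha : a (Fin.last n) ≠ 0) {z : K} (hz : (polyOf a).IsRoot z) :
    ‖z‖ < (∑ k, ‖a k‖) / ‖a (Fin.last n)‖ + 1 := by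
  have hdeg := (degree_polyOf_eq_iff a).2 ha
  have hlead : (polyOf a).leadingCoeff = a (Fin.last n) := by
    rw [leadingCoeff, natDegree_eq_of_degree_eq_some hdeg]
    exact coeff_polyOf_val a (Fin.last n)
  have hsup : (Finset.range (polyOf a).natDegree).sup (‖(polyOf a).coeff ·‖₊) ≤ ∑ k, ‖a k‖₊ :=
    Finset.sup_le fun i _ => by
      rw [coeff_polyOf]
      refine (nnnorm_sum_le _ _).trans (Finset.sum_le_sum fun k _ => ?_)
      split_ifs <;> simp
  have hp : polyOf a ≠ 0 := fun h => by simp [h] at hdeg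
  calc ‖z‖ < cauchyBound (polyOf a) := hz.norm_lt_cauchyBound hp
    _ ≤ (∑ k, ‖a k‖) / ‖a (Fin.last n)‖ + 1 := by
        rw [cauchyBound, hlead]
        push_cast
        gcongr
        exact (NNReal.coe_le_coe.2 hsup).trans_eq (by push_cast; rfl)

theorem isClosed_setOf_exists_mem_isRoot_iterate_derivative_polyOf {K : Type*} [CommSemiring K]
    [TopologicalSpace K] [IsTopologicalSemiring K] [T2Space K] {n : ℕ} (k : ℕ) {s : Set K}
    (hs : IsCompact s) :
    IsClosed {a : Fin (n + 1) → K | ∃ z ∈ s, ∀ m ≤ k, (derivative^[m] (polyOf a)).IsRoot z} := by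
  have : CompactSpace s := isCompact_iff_compactSpace.mp hs
  have hclosed : IsClosed {p : (Fin (n + 1) → K) × s |
      ∀ m ≤ k, (derivative^[m] (polyOf p.1)).eval (p.2 : K) = 0} := by
    simp only [Set.ofPred_forall]
    exact isClosed_iInter fun m => isClosed_iInter fun _ => isClosed_eq
      (continuous_fst.eval_iterate_derivative_polyOf (continuous_subtype_val.comp continuous_snd) m)
      continuous_const
  convert isClosedMap_fst_of_compactSpace _ hclosed using 1
  ext a
  constructor
  · rintro ⟨z, hz, hroot⟩
    exact ⟨(a, ⟨z, hz⟩), hroot, rfl⟩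
  · rintro ⟨⟨a, z, hz⟩, hroot, rfl⟩
    exact ⟨z, hz, hroot⟩

theorem isOpen_simple_or_double_roots_general (n : ℕ) :
    IsOpen {a : Fin (n + 1) → ℂ |
      (polyOf a).degree = (n : ℕ) ∧
      ∀ z : ℂ, (polyOf a).rootMultiplicity z ≤ 2} := by
  refine isOpen_iff_mem_nhds.2 fun a₀ ⟨hdeg₀, hmult₀⟩ => ?_
  have ha₀ := (degree_polyOf_eq_iff a₀).1 hdeg₀
  set bound : (Fin (n + 1) → ℂ) → ℝ := fun a => (∑ k, ‖a k‖) / ‖a (Fin.last n)‖ + 1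
  have hsum : Continuous fun a : Fin (n + 1) → ℂ => ∑ k, ‖a k‖ := by fun_prop
  have hbound : ContinuousAt bound a₀ := by fun_prop (disch := exact norm_ne_zero_iff.2 ha₀)
  have hgood₀ : a₀ ∉ {a | ∃ z ∈ Metric.closedBall 0 (bound a₀ + 1),
      ∀ m ≤ 2, (derivative^[m] (polyOf a)).IsRoot z} := by
    rintro ⟨z, -, hz⟩
    have hp₀ : polyOf a₀ ≠ 0 := fun h => by simp [h] at hdeg₀
    exact (hmult₀ z).not_gt ((lt_rootMultiplicity_iff_isRoot_iterate_derivative hp₀).2 hz)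
  filter_upwards [(continuous_apply (Fin.last n)).continuousAt.eventually_ne ha₀,
    hbound.eventually_lt continuousAt_const (lt_add_one _),
    ((isClosed_setOf_exists_mem_isRoot_iterate_derivative_polyOf 2
      (isCompact_closedBall 0 _)).isOpen_compl.mem_nhds hgood₀)] with a ha hbound_a hgood
  refine ⟨(degree_polyOf_eq_iff a).2 ha, fun z => not_lt.1 fun hz => ?_⟩
  have hroot : ∀ m ≤ 2, (derivative^[m] (polyOf a)).IsRoot z := fun m hm =>
    isRoot_iterate_derivative_of_lt_rootMultiplicity (hm.trans_lt hz)
  refine hgood ⟨z, ?_, hroot⟩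
  rw [mem_closedBall_zero_iff]
  exact ((norm_lt_of_isRoot_polyOf ha (hroot 0 (Nat.zero_le 2))).trans hbound_a).le

/-- The set of complex polynomials of degree exactly `n` whose roots are all simple or
double is open in `ℂₙ[X]`. -/
theorem isOpen_simple_or_double_roots (n : ℕ) (hn : 1 ≤ n) :
    IsOpen {a : Fin (n + 1) → ℂ |
      (polyOf a).degree = (n : ℕ) ∧
      ∀ z : ℂ, (polyOf a).rootMultiplicity z ≤ 2} :=
  isOpen_simple_or_double_roots_general n
end

section
/- Let K be a commutative field and let A, B be n×n X-form matrices over K. Then the product AB is an X-form matrix. -/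
/-! The anti-diagonal condition `i + j = n - 1` says `j = Fin.rev i`, so a matrix is X-form
iff every nonzero entry in row `i` sits in column `i` or `rev i`. Since `rev` is an involution,
the set `{i, rev i}` is closed under `k ↦ {k, rev k}`, and each nonzero term `A i k * B k j` of
a product entry therefore lands in column `i` or `rev i`. -/

theorem Fin.val_add_val_eq_sub_one_iff {n : ℕ} (i j : Fin n) :
    (i : ℕ) + j = n - 1 ↔ j = i.rev := by
  rw [Fin.ext_iff, Fin.val_rev]
  omega

theorem isXForm_iff {K : Type*} [Field K] {n : ℕ} {A : Matrix (Fin n) (Fin n) K} :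
    IsXForm A ↔ ∀ i j, A i j ≠ 0 → j = i ∨ j = i.rev := by
  simp only [IsXForm, Fin.val_add_val_eq_sub_one_iff, ne_eq, Fin.val_inj]
  refine forall₂_congr fun i j => ?_
  constructor
  · intro h hij
    by_contra! hne
    exact hij (h (Ne.symm hne.1) hne.2)
  · intro h hij hrev
    by_contra hne
    rcases h hne with rfl | rfl <;> contradiction

/-- The product of two X-form matrices is an X-form matrix. -/
theorem isXForm_mul {K : Type*} [Field K] {n : ℕ} (A B : Matrix (Fin n) (Fin n) K)
    (hA : IsXForm A) (hB : IsXForm B) : IsXForm (A * B) := by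
  rw [isXForm_iff] at hA hB ⊢
  intro i j hij
  rw [Matrix.mul_apply] at hij
  obtain ⟨k, -, hk⟩ := Finset.exists_ne_zero_of_sum_ne_zero hij
  obtain ⟨hAik, hBkj⟩ := mul_ne_zero_iff.mp hk
  rcases hA i k hAik with rfl | rfl <;> rcases hB _ j hBkj with rfl | rfl <;> simp
end

section
/- Let K be a commutative field and A an invertible n×n X-form matrix over K. Then the inverse A⁻¹ is an X-form matrix. -/
/-!
X-form matrices are closed under products, because the relation "`j = i` or `i + j = n - 1`"
on indices is transitive; so they form a finite-dimensional subalgebra of the matrix algebra.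
In a finite-dimensional algebra over a field an element that is not a zero divisor is a unit,
so the inverse of an element of the subalgebra that is a unit in the ambient algebra already
lies in the subalgebra.
-/

open nonZeroDivisors

theorem Subalgebra.ringInverse_mem {K A : Type*} [Field K] [Ring A] [Algebra K A]
    (S : Subalgebra K A) [FiniteDimensional K S] {a : A} (ha : a ∈ S) :
    Ring.inverse a ∈ S := by
  by_cases hu : IsUnit a
  · have : IsArtinianRing S := isArtinian_of_tower K inferInstance
    have hb : (⟨a, ha⟩ : S) ∈ S⁰ :=
      comap_nonZeroDivisors_le_of_injective (f := S.val) Subtype.val_injective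
        hu.mem_nonZeroDivisors
    obtain ⟨u, hua⟩ := IsArtinianRing.isUnit_of_mem_nonZeroDivisors hb
    have hau : a = (u.map S.val.toMonoidHom : A) := by simp [hua]
    rw [hau, Ring.inverse_unit]
    exact (↑u⁻¹ : S).2
  · rw [Ring.inverse_non_unit a hu]
    exact S.zero_mem

namespace IsXForm

variable {K : Type*} [Field K] {n : ℕ}

theorem add {A B : Matrix (Fin n) (Fin n) K} (hA : IsXForm A) (hB : IsXForm B) :
    IsXForm (A + B) := fun i j hij hsum => by
  rw [Matrix.add_apply, hA i j hij hsum, hB i j hij hsum, add_zero]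

theorem mul {A B : Matrix (Fin n) (Fin n) K} (hA : IsXForm A) (hB : IsXForm B) :
    IsXForm (A * B) := fun i j hij hsum => by
  rw [Matrix.mul_apply]
  refine Finset.sum_eq_zero fun k _ => ?_
  by_cases hik : (i : ℕ) = k ∨ (i : ℕ) + k = n - 1
  · have hkj : (k : ℕ) ≠ j ∧ (k : ℕ) + j ≠ n - 1 := by omega
    rw [hB k j hkj.1 hkj.2, mul_zero]
  · rw [not_or] at hik
    rw [hA i k hik.1 hik.2, zero_mul]

theorem algebraMap (c : K) : IsXForm (algebraMap K (Matrix (Fin n) (Fin n) K) c) :=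
  fun i j hij _ => by
    rw [Matrix.algebraMap_matrix_apply, if_neg (Fin.val_ne_iff.mp hij)]

end IsXForm

def xFormSubalgebra (K : Type*) [Field K] (n : ℕ) :
    Subalgebra K (Matrix (Fin n) (Fin n) K) where
  carrier := {A | IsXForm A}
  mul_mem' := IsXForm.mul
  add_mem' := IsXForm.add
  algebraMap_mem' := IsXForm.algebraMap

theorem isXForm_inv_general {K : Type*} [Field K] {n : ℕ} (A : Matrix (Fin n) (Fin n) K)
    (hA : IsXForm A) : IsXForm A⁻¹ := by
  rw [Matrix.nonsing_inv_eq_ringInverse]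
  exact (xFormSubalgebra K n).ringInverse_mem hA

/-- The inverse of an invertible X-form matrix is an X-form matrix. -/
theorem isXForm_inv {K : Type*} [Field K] {n : ℕ} (A : Matrix (Fin n) (Fin n) K)
    (hA : IsXForm A) (hu : IsUnit A) : IsXForm A⁻¹ :=
  isXForm_inv_general A hA
end
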